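/- arXiv:1402.2806 — 2 statements merged into one kernel-verified Lean document; each statement's English description precedes it below -/
import Mathlib

section
/- A graph on 8 vertices with no independent set of size 3 and no K_4 subgraph admits no separation of order 2. -/
/-!
Each side `A \ B`, `B \ A` of the separation is a clique: two non-adjacent vertices on one side
together with any vertex on the other side would be an independent triple. As `H` has no `K₄`,
each side has at most three vertices. A vertex `x` of the separator cannot miss a vertex `a` of
one side and a vertex `b` of the other, since `{x, a, b}` would be independent; so `x` is complete
to one side, which then has at most two vertices. Hence there are at most `2 + 3 + 2 = 7` vertices, not 8.
-/

open Finset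

namespace SimpleGraph

variable {V : Type*} {G : SimpleGraph V}

lemma IsClique.card_lt_of_cliqueFree {n : ℕ} {s : Finset V} (hs : G.IsClique (s : Set V))
    (h : G.CliqueFree n) : #s < n := by
  by_contra! hn
  obtain ⟨t, hts, ht⟩ := exists_subset_card_eq hn
  exact h t ⟨hs.subset (by simpa using hts), ht⟩

lemma IsClique.card_add_one_lt_of_forall_adj {n : ℕ} {s : Finset V}
    (hs : G.IsClique (s : Set V)) (h : G.CliqueFree n) {x : V} (hx : ∀ u ∈ s, G.Adj x u) :
    #s + 1 < n := by
  classical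
  have hins := (⟨hs, rfl⟩ : G.IsNClique #s s).insert hx
  exact hins.card_eq ▸ hins.isClique.card_lt_of_cliqueFree h

lemma adj_of_cliqueFree_compl_three (h : Gᶜ.CliqueFree 3) {u v w : V} (huv : u ≠ v)
    (hwu : w ≠ u) (hwv : w ≠ v) (hu : ¬G.Adj w u) (hv : ¬G.Adj w v) : G.Adj u v := by
  classical
  by_contra huv'
  exact h {w, u, v} (is3Clique_triple_iff.mpr ⟨⟨hwu, hu⟩, ⟨hwv, hv⟩, ⟨huv, huv'⟩⟩)

lemma isClique_of_forall_not_adj (h : Gᶜ.CliqueFree 3) {s : Set V} {w : V} (hw : w ∉ s)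
    (hs : ∀ u ∈ s, ¬G.Adj w u) : G.IsClique s := fun u hu v hv huv =>
  adj_of_cliqueFree_compl_three h huv (ne_of_mem_of_not_mem hu hw).symm
    (ne_of_mem_of_not_mem hv hw).symm (hs u hu) (hs v hv)

section Separation

variable [DecidableEq V] {A B : Finset V}

lemma isClique_sdiff_of_separation (hind : Gᶜ.CliqueFree 3)
    (hsep : ∀ a ∈ A \ B, ∀ b ∈ B \ A, ¬G.Adj a b) (hB : (B \ A).Nonempty) :
    G.IsClique (↑(A \ B) : Set V) := by
  obtain ⟨b, hb⟩ := hB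
  exact isClique_of_forall_not_adj hind (fun h => (mem_sdiff.1 hb).2 (mem_sdiff.1 h).1)
    fun a ha hba => hsep a ha b hb hba.symm

lemma forall_adj_or_forall_adj_of_mem_inter (hind : Gᶜ.CliqueFree 3)
    (hsep : ∀ a ∈ A \ B, ∀ b ∈ B \ A, ¬G.Adj a b) {x : V} (hx : x ∈ A ∩ B) :
    (∀ a ∈ A \ B, G.Adj x a) ∨ ∀ b ∈ B \ A, G.Adj x b := by
  by_contra! ⟨⟨a, ha, hxa⟩, ⟨b, hb, hxb⟩⟩
  have hab : a ≠ b := ne_of_mem_of_not_mem (mem_sdiff.1 ha).1 (mem_sdiff.1 hb).2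
  have hxa' : x ≠ a := ne_of_mem_of_not_mem (mem_inter.1 hx).2 (mem_sdiff.1 ha).2
  have hxb' : x ≠ b := ne_of_mem_of_not_mem (mem_inter.1 hx).1 (mem_sdiff.1 hb).2
  exact hsep a ha b hb (adj_of_cliqueFree_compl_three hind hab hxa' hxb' hxa hxb)

theorem card_union_le_card_inter_add_five (hind : Gᶜ.CliqueFree 3) (hK4 : G.CliqueFree 4)
    (hA : (A \ B).Nonempty) (hB : (B \ A).Nonempty)
    (hsep : ∀ a ∈ A \ B, ∀ b ∈ B \ A, ¬G.Adj a b) (hS : (A ∩ B).Nonempty) :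
    #(A ∪ B) ≤ #(A ∩ B) + 5 := by
  obtain ⟨x, hx⟩ := hS
  have hcA := isClique_sdiff_of_separation hind hsep hB
  have hcB := isClique_sdiff_of_separation hind (fun b hb a ha h => hsep a ha b hb h.symm) hA
  have hA3 := hcA.card_lt_of_cliqueFree hK4
  have hB3 := hcB.card_lt_of_cliqueFree hK4
  have hsum : #(A \ B) + #(B \ A) + #(A ∩ B) = #(A ∪ B) := by
    have := card_sdiff_add_card_inter A B
    have := card_sdiff_add_card_inter B A
    have := card_union_add_card_inter A B
    rw [inter_comm B A] at *
    omega
  rcases forall_adj_or_forall_adj_of_mem_inter hind hsep hx with h | h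
  · have := hcA.card_add_one_lt_of_forall_adj hK4 h
    omega
  · have := hcB.card_add_one_lt_of_forall_adj hK4 h
    omega

end Separation

end SimpleGraph

/-- A graph on 8 vertices with no independent set of size 3 and no `K₄`
subgraph admits no separation of order 2. -/
theorem stmt_8 (H : SimpleGraph (Fin 8))
    (hind : Hᶜ.CliqueFree 3) (hK4 : H.CliqueFree 4)
    (A B : Finset (Fin 8))
    (hUnion : A ∪ B = Finset.univ)
    (hA : (A \ B).Nonempty) (hB : (B \ A).Nonempty)
    (hsep : ∀ a ∈ A \ B, ∀ b ∈ B \ A, ¬ H.Adj a b)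
    (horder : (A ∩ B).card = 2) :
    False := by
  have hS : (A ∩ B).Nonempty := card_pos.mp (by omega)
  have := H.card_union_le_card_inter_add_five hind hK4 hA hB hsep hS
  rw [hUnion, card_univ, Fintype.card_fin, horder] at this
  omega
end

section
/- A graph on 8 vertices with no independent set of size 3 and no K_4 subgraph admits no separation of order 3; hence, combined with the absance of separations of order ≤ 2, such a graph is 4-connected. -/
/-!
Let `X`, `Y` be the two sides of a separation with separator `S`. Two non-adjacent vertices of
`X` together with any vertex of `Y` would be independent, so `X` and `Y` are cliques, of size at
most 3 as there is no `K₄`. With `|S| ≤ 3` and 8 vertices the sides have sizes 3,3 or 2,3.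
A vertex `s ∈ S` misses some vertex `y` of a triangle side, and then has to see every vertex
that misses `y`, i.e. the whole other side. For sides 3,3 this contradicts `s` also missing a
vertex of the other triangle; for sides 2,3 the separator has size 3, so it contains an edge,
which together with the 2-side forms a `K₄`.
-/

open Finset

lemma Finset.compl_sdiff_union_sdiff {α : Type*} [Fintype α] [DecidableEq α] {A B : Finset α}
    (hAB : A ∪ B = univ) : (A \ B ∪ B \ A)ᶜ = A ∩ B := by
  ext v
  have hv : v ∈ A ∪ B := hAB ▸ mem_univ v
  simp only [mem_union, mem_compl, mem_sdiff, mem_inter] at hv ⊢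
  tauto

namespace SimpleGraph

variable {V : Type*} {H : SimpleGraph V}

lemma adj_or_adj_or_adj_of_compl_cliqueFree_three (hind : Hᶜ.CliqueFree 3) {a b c : V}
    (hab : a ≠ b) (hac : a ≠ c) (hbc : b ≠ c) : H.Adj a b ∨ H.Adj a c ∨ H.Adj b c := by
  classical
  by_contra! h
  exact hind {a, b, c} (is3Clique_triple_iff.2 ⟨(compl_adj H a b).2 ⟨hab, h.1⟩,
    (compl_adj H a c).2 ⟨hac, h.2.1⟩, (compl_adj H b c).2 ⟨hbc, h.2.2⟩⟩)

lemma exists_adj_of_compl_cliqueFree {n : ℕ} (hind : Hᶜ.CliqueFree n) {S : Finset V}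
    (hS : S.card = n) : ∃ a ∈ S, ∃ b ∈ S, a ≠ b ∧ H.Adj a b := by
  by_contra! h
  exact hind S ⟨fun a ha b hb hab => (compl_adj H a b).2 ⟨hab, h a ha b hb hab⟩, hS⟩

lemma isClique_of_forall_not_adj_s9 (hind : Hᶜ.CliqueFree 3) {X : Set V} {y : V} (hy : y ∉ X)
    (hXy : ∀ x ∈ X, ¬ H.Adj x y) : H.IsClique X := by
  intro a ha b hb hab
  rcases adj_or_adj_or_adj_of_compl_cliqueFree_three hind hab (ne_of_mem_of_not_mem ha hy)
    (ne_of_mem_of_not_mem hb hy) with h | h | h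
  · exact h
  · exact absurd h (hXy a ha)
  · exact absurd h (hXy b hb)

lemma IsClique.card_lt_of_cliqueFree_s9 {n : ℕ} (hn : H.CliqueFree n) {X : Finset V}
    (hX : H.IsClique (X : Set V)) : X.card < n := by
  by_contra! h
  obtain ⟨t, htX, ht⟩ := exists_subset_card_eq h
  exact hn t ⟨hX.subset (coe_subset.2 htX), ht⟩

lemma IsNClique.exists_not_adj_of_cliqueFree [DecidableEq V] {n : ℕ} {Y : Finset V}
    (hY : H.IsNClique n Y) (hn : H.CliqueFree (n + 1)) (v : V) : ∃ y ∈ Y, ¬ H.Adj v y := by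
  by_contra! h
  exact hn _ (hY.insert h)

lemma IsNClique.forall_adj_of_separation [DecidableEq V] (hind : Hᶜ.CliqueFree 3)
    (hK4 : H.CliqueFree 4) {X Y S : Finset V} (hY : H.IsNClique 3 Y) (hXY : Disjoint X Y)
    (hsep : ∀ x ∈ X, ∀ y ∈ Y, ¬ H.Adj x y) (hSX : Disjoint S X) (hSY : Disjoint S Y) :
    ∀ s ∈ S, ∀ x ∈ X, H.Adj s x := by
  intro s hs x hx
  obtain ⟨y, hy, hsy⟩ := hY.exists_not_adj_of_cliqueFree hK4 s
  have hsx : s ≠ x := (ne_of_mem_of_not_mem hx (Finset.disjoint_left.1 hSX hs)).symm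
  have hsy' : s ≠ y := (ne_of_mem_of_not_mem hy (Finset.disjoint_left.1 hSY hs)).symm
  have hxy : x ≠ y := (ne_of_mem_of_not_mem hy (Finset.disjoint_left.1 hXY hx)).symm
  rcases adj_or_adj_or_adj_of_compl_cliqueFree_three hind hsx hsy' hxy with h | h | h
  · exact h
  · exact absurd h hsy
  · exact absurd h (hsep x hx y hy)

lemma false_of_isNClique_two_of_isNClique_three [DecidableEq V] (hind : Hᶜ.CliqueFree 3)
    (hK4 : H.CliqueFree 4) {X Y S : Finset V} (hX : H.IsNClique 2 X) (hY : H.IsNClique 3 Y)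
    (hXY : Disjoint X Y) (hsep : ∀ x ∈ X, ∀ y ∈ Y, ¬ H.Adj x y) (hSX : Disjoint S X)
    (hSY : Disjoint S Y) (hS : S.card = 3) : False := by
  have hSadj := hY.forall_adj_of_separation hind hK4 hXY hsep hSX hSY
  obtain ⟨a, ha, b, hb, -, hab⟩ := exists_adj_of_compl_cliqueFree hind hS
  exact hK4 _ ((hX.insert (hSadj b hb)).insert ((forall_mem_insert _ _ _).2 ⟨hab, hSadj a ha⟩))

variable [Fintype V] [DecidableEq V]

theorem card_le_seven_of_separation (hind : Hᶜ.CliqueFree 3) (hK4 : H.CliqueFree 4)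
    {X Y : Finset V} (hX : X.Nonempty) (hY : Y.Nonempty) (hXY : Disjoint X Y)
    (hsep : ∀ x ∈ X, ∀ y ∈ Y, ¬ H.Adj x y) (hS : (X ∪ Y)ᶜ.card ≤ 3) :
    Fintype.card V ≤ 7 := by
  set S := (X ∪ Y)ᶜ
  have hSX : Disjoint S X := disjoint_compl_left.mono_right subset_union_left
  have hSY : Disjoint S Y := disjoint_compl_left.mono_right subset_union_right
  have hcard : X.card + Y.card + S.card = Fintype.card V := by
    rw [← card_union_of_disjoint hXY, card_add_card_compl]
  have hsep' : ∀ y ∈ Y, ∀ x ∈ X, ¬ H.Adj y x := fun y hy x hx h => hsep x hx y hy h.symm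
  have hXc : H.IsClique (X : Set V) := by
    obtain ⟨y, hy⟩ := hY
    exact isClique_of_forall_not_adj_s9 hind
      (mem_coe.not.2 (Finset.disjoint_right.1 hXY hy))
      fun x hx => hsep x hx y hy
  have hYc : H.IsClique (Y : Set V) := by
    obtain ⟨x, hx⟩ := hX
    exact isClique_of_forall_not_adj_s9 hind
      (mem_coe.not.2 (Finset.disjoint_left.1 hXY hx))
      fun y hy => hsep' y hy x hx
  have hX3 := hXc.card_lt_of_cliqueFree_s9 hK4
  have hY3 := hYc.card_lt_of_cliqueFree_s9 hK4
  by_contra! h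
  obtain h | h | h : (X.card = 2 ∧ Y.card = 3 ∧ S.card = 3) ∨
      (X.card = 3 ∧ Y.card = 2 ∧ S.card = 3) ∨ (X.card = 3 ∧ Y.card = 3 ∧ S.Nonempty) := by
    rw [← card_pos]; omega
  · exact false_of_isNClique_two_of_isNClique_three hind hK4 ⟨hXc, h.1⟩ ⟨hYc, h.2.1⟩ hXY hsep
      hSX hSY h.2.2
  · exact false_of_isNClique_two_of_isNClique_three hind hK4 ⟨hYc, h.2.1⟩ ⟨hXc, h.1⟩ hXY.symm
      hsep' hSY hSX h.2.2
  · obtain ⟨s, hs⟩ := h.2.2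
    obtain ⟨x, hx, hsx⟩ := IsNClique.exists_not_adj_of_cliqueFree ⟨hXc, h.1⟩ hK4 s
    exact hsx (IsNClique.forall_adj_of_separation hind hK4 ⟨hYc, h.2.1⟩ hXY hsep hSX hSY
      s hs x hx)

lemma exists_separation_of_not_reachable_induce {s : Set V} {u v : ↥sᶜ}
    (huv : ¬ (H.induce sᶜ).Reachable u v) :
    ∃ X Y : Finset V, X.Nonempty ∧ Y.Nonempty ∧ Disjoint X Y ∧
      (∀ x ∈ X, ∀ y ∈ Y, ¬ H.Adj x y) ∧ (((X ∪ Y)ᶜ : Finset V) : Set V) = s := by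
  classical
  let R : V → Prop := fun w => ∃ hw : w ∈ sᶜ, (H.induce sᶜ).Reachable u ⟨w, hw⟩
  refine ⟨univ.filter R, univ.filter (fun w => w ∉ s ∧ ¬ R w),
    ⟨u, mem_filter.2 ⟨mem_univ _, u.2, .rfl⟩⟩, ⟨v, by simpa [R] using ⟨v.2, fun _ => huv⟩⟩,
    disjoint_filter.2 fun w _ hR hw => hw.2 hR, ?_, ?_⟩
  · simp only [mem_filter, mem_univ, true_and]
    rintro x ⟨hx, hux⟩ y ⟨hy, hnuy⟩ hxy
    exact hnuy ⟨hy, hux.trans (Adj.reachable (induce_adj.2 hxy))⟩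
  · ext w
    simp only [coe_compl, coe_union, coe_filter, mem_univ, true_and, Set.mem_compl_iff,
      Set.mem_union, Set.mem_ofPred_eq, R]
    by_cases hw : w ∈ s <;> simp [hw]

end SimpleGraph

open SimpleGraph in
/-- A graph on 8 vertices with no independent set of size 3 and no `K₄`
subgraph admits no separation of order 3; hence (given there are also no
separations of order at most 2) such a graph is 4-connected: it stays
connected after deleting any set of at most 3 vertices. -/
theorem stmt_9 (H : SimpleGraph (Fin 8))
    (hind : Hᶜ.CliqueFree 3) (hK4 : H.CliqueFree 4) :
    (∀ A B : Finset (Fin 8), A ∪ B = Finset.univ →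
      (A \ B).Nonempty → (B \ A).Nonempty →
      (∀ a ∈ A \ B, ∀ b ∈ B \ A, ¬ H.Adj a b) →
      (A ∩ B).card = 3 → False) ∧
    (∀ s : Set (Fin 8), s.ncard ≤ 3 → (H.induce sᶜ).Connected) := by
  have no_separation : ∀ X Y : Finset (Fin 8), X.Nonempty → Y.Nonempty → Disjoint X Y →
      (∀ x ∈ X, ∀ y ∈ Y, ¬ H.Adj x y) → (X ∪ Y)ᶜ.card ≤ 3 → False :=
    fun X Y hX hY hXY hsep hS => by
      simpa using card_le_seven_of_separation hind hK4 hX hY hXY hsep hS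
  refine ⟨fun A B hAB hA hB hsep hS => ?_, fun s hs => ?_⟩
  · exact no_separation _ _ hA hB disjoint_sdiff_sdiff hsep
      (by rw [compl_sdiff_union_sdiff hAB, hS])
  · have hne : sᶜ.Nonempty := Set.nonempty_compl.2 fun h => by simp [h] at hs
    refine (connected_iff _).2 ⟨fun u v => ?_, hne.to_subtype⟩
    by_contra huv
    obtain ⟨X, Y, hX, hY, hXY, hsep, hXYs⟩ := exists_separation_of_not_reachable_induce huv
    exact no_separation X Y hX hY hXY hsep (by rw [← Set.ncard_coe_finset, hXYs]; exact hs)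
end
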